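/- arXiv:1207.0116 — 2 statements merged into one kernel-verified Lean document; each statement's English description precedes it below -/
import Mathlib

section
/- Let κ be an odd positive integer and let f be a nonzero polynomial in one variable q with real coefficients, all of whose complex roots are either 0 or roots of unity, such that f(−1) ≠ 0. Then π_{κ/2}(f) = κ·A(f). -/
open Polynomial

/-- `argCount t f` is the cardinality of the multiset `Arg_t(f)` of real numbers `λ` with
`0 < λ ≤ 2πt` such that `e^{iλ}` is a (complex) root of the real polynomial `f`, each such `λ`
counted with the multiplicity of `e^{iλ}` as a root of `f`. -/
noncomputable def argCount (t : ℝ) (f : Polynomial ℝ) : ℕ :=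
  ((f.map (algebraMap ℝ ℂ)).roots.map fun ξ =>
    Nat.card {l : ℝ // 0 < l ∧ l ≤ 2 * Real.pi * t ∧ Complex.exp ((l : ℂ) * Complex.I) = ξ}).sum

/-- `piFn κ d f` is the rational number
`π_{κ/d}(f) = (a(f) + A(f))·(κ/d) + |Arg_{κ/d}(f)| + (1/2)·(multiplicity of 1 as a root of f)`,
where `a(f)` is the multiplicity of `0` as a root of `f` and `A(f)` is the degree of `f`. -/
noncomputable def piFn (κ d : ℕ) (f : Polynomial ℝ) : ℚ :=
  ((rootMultiplicity 0 f : ℚ) + (f.natDegree : ℚ)) * (κ : ℚ) / (d : ℚ)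
    + (argCount ((κ : ℝ) / (d : ℝ)) f : ℚ) + (rootMultiplicity 1 f : ℚ) / 2

/-- All complex roots of `f` are either `0` or roots of unity. -/
def RootsZeroOrUnity (f : Polynomial ℝ) : Prop :=
  ∀ z ∈ (f.map (algebraMap ℝ ℂ)).roots, z = 0 ∨ ∃ n : ℕ, 0 < n ∧ z ^ n = 1

/-!
Write `κ = 2m + 1`. For `ξ` on the unit circle the solutions `λ ∈ (0, κπ]` of `e^{iλ} = ξ` are the
numbers `arg ξ + 2πk`, and there are `m + [0 < arg ξ]` of them; for `ξ = 0` there are none. The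
complex roots of the real polynomial `f` are stable under conjugation, and for `ξ ≠ ±1` exactly one
of `ξ`, `conj ξ` has positive argument. Pairing `ξ` with `conj ξ` therefore gives
`2 |Arg_{κ/2}(f)| + κ a(f) + mult₁(f) = κ A(f)` as soon as `-1` is not a root, and substituting this
into `π_{κ/2}(f)` leaves `κ A(f)`.
-/

open Complex ComplexConjugate

theorem Multiset.sum_map_ite_eq_count {α : Type*} [DecidableEq α] (s : Multiset α) (a : α) :
    (s.map fun x => if a = x then 1 else 0).sum = s.count a := by
  induction s using Multiset.induction_on with
  | empty => simp
  | cons x s ih => simp [Multiset.count_cons, ih, add_comm]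

noncomputable def angleCount (t : ℝ) (ξ : ℂ) : ℕ :=
  Nat.card {l : ℝ // 0 < l ∧ l ≤ 2 * Real.pi * t ∧ exp ((l : ℂ) * I) = ξ}

theorem argCount_eq_sum_angleCount (t : ℝ) (f : ℝ[X]) :
    argCount t f = ((f.map (algebraMap ℝ ℂ)).roots.map (angleCount t)).sum :=
  rfl

theorem angleCount_zero (t : ℝ) : angleCount t 0 = 0 := by
  rw [angleCount, Nat.card_eq_zero]
  exact Or.inl ⟨fun l => exp_ne_zero _ l.2.2.2⟩

theorem exp_arg_mul_I_of_norm_eq_one {ξ : ℂ} (hξ : ‖ξ‖ = 1) : exp (ξ.arg * I) = ξ := by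
  simpa [hξ] using norm_mul_exp_arg_mul_I ξ

theorem exp_ofReal_mul_I_eq_iff {ξ : ℂ} (hξ : ‖ξ‖ = 1) (l : ℝ) :
    exp ((l : ℂ) * I) = ξ ↔ ∃ k : ℤ, ξ.arg + 2 * Real.pi * k = l := by
  conv_lhs => rw [← exp_arg_mul_I_of_norm_eq_one hξ, exp_eq_exp_iff_exists_int]
  refine exists_congr fun k => ⟨fun h => ?_, fun h => ?_⟩
  · apply_fun (fun z => (z * -I).re) at h
    simpa [mul_assoc, mul_comm, mul_left_comm] using h.symm
  · rw [← h]; push_cast; ring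

theorem pos_add_two_pi_mul_iff {a : ℝ} (ha₁ : -Real.pi < a) (ha₂ : a ≤ Real.pi) (k : ℤ) :
    0 < a + 2 * Real.pi * k ↔ (if 0 < a then -1 else 0) < k := by
  have hπ := Real.pi_pos
  split_ifs with ha
  · refine ⟨fun h => ?_, fun hk => ?_⟩
    · by_contra! hk
      have : (k : ℝ) ≤ -1 := by exact_mod_cast hk
      nlinarith
    · have : (0 : ℝ) ≤ k := by exact_mod_cast (show 0 ≤ k by omega)
      positivity
  · refine ⟨fun h => ?_, fun hk => ?_⟩
    · by_contra! hk
      have : (k : ℝ) ≤ 0 := by exact_mod_cast hk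
      nlinarith
    · have : (1 : ℝ) ≤ k := by exact_mod_cast hk
      nlinarith

theorem add_two_pi_mul_le_odd_mul_pi_iff {a : ℝ} (ha₁ : -Real.pi < a) (ha₂ : a ≤ Real.pi)
    (m : ℕ) (k : ℤ) :
    a + 2 * Real.pi * k ≤ 2 * Real.pi * ((2 * m + 1) / 2) ↔ k ≤ m := by
  have hπ := Real.pi_pos
  refine ⟨fun h => ?_, fun hk => ?_⟩
  · by_contra! hk
    have : (m : ℝ) + 1 ≤ k := by exact_mod_cast hk
    nlinarith
  · have : (k : ℝ) ≤ m := by exact_mod_cast hk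
    nlinarith

theorem angleCount_odd_half {ξ : ℂ} (hξ : ‖ξ‖ = 1) (m : ℕ) :
    angleCount ((2 * m + 1) / 2) ξ = m + if 0 < ξ.arg then 1 else 0 := by
  have hset : {l : ℝ | 0 < l ∧ l ≤ 2 * Real.pi * ((2 * m + 1) / 2) ∧ exp ((l : ℂ) * I) = ξ} =
      (fun k : ℤ => ξ.arg + 2 * Real.pi * k) ''
        Finset.Ioc (if 0 < ξ.arg then -1 else 0) (m : ℤ) := by
    ext l
    simp only [Set.mem_ofPred_eq, exp_ofReal_mul_I_eq_iff hξ, Set.mem_image, Finset.mem_coe,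
      Finset.mem_Ioc, ← pos_add_two_pi_mul_iff (neg_pi_lt_arg ξ) (arg_le_pi ξ),
      ← add_two_pi_mul_le_odd_mul_pi_iff (neg_pi_lt_arg ξ) (arg_le_pi ξ)]
    constructor
    · rintro ⟨h0, hl, k, rfl⟩
      exact ⟨k, ⟨h0, hl⟩, rfl⟩
    · rintro ⟨k, ⟨h0, hl⟩, rfl⟩
      exact ⟨h0, hl, k, rfl⟩
  have hinj : Function.Injective fun k : ℤ => ξ.arg + 2 * Real.pi * k := by
    intro k₁ k₂ h
    exact_mod_cast mul_left_cancel₀ (by positivity) (add_left_cancel h)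
  rw [angleCount, ← Set.coe_ofPred, Nat.card_coe_set_eq, hset, Set.ncard_image_of_injective _ hinj,
    Set.ncard_coe_finset, Int.card_Ioc]
  split_ifs <;> omega

theorem eq_one_of_norm_eq_one_of_arg_eq_zero {ξ : ℂ} (hξ : ‖ξ‖ = 1) (h : ξ.arg = 0) : ξ = 1 := by
  simpa [h] using (exp_arg_mul_I_of_norm_eq_one hξ).symm

theorem eq_neg_one_of_norm_eq_one_of_arg_eq_pi {ξ : ℂ} (hξ : ‖ξ‖ = 1) (h : ξ.arg = Real.pi) :
    ξ = -1 := by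
  simpa [h] using (exp_arg_mul_I_of_norm_eq_one hξ).symm

theorem angleCount_odd_half_add_angleCount_conj {ξ : ℂ} (hξ : ‖ξ‖ = 1) (hξ' : ξ ≠ -1) (m : ℕ) :
    angleCount ((2 * m + 1) / 2) ξ + angleCount ((2 * m + 1) / 2) (conj ξ)
      + (if ξ = 1 then 1 else 0) = 2 * m + 1 := by
  have harg : ξ.arg ≠ Real.pi := fun h => hξ' (eq_neg_one_of_norm_eq_one_of_arg_eq_pi hξ h)
  rw [angleCount_odd_half hξ, angleCount_odd_half (by rwa [norm_conj]), arg_conj, if_neg harg]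
  rcases lt_trichotomy ξ.arg 0 with h | h | h
  · have hξ₁ : ξ ≠ 1 := by rintro rfl; simp at h
    rw [if_neg (lt_asymm h), if_pos (neg_pos.2 h), if_neg hξ₁]
    omega
  · rw [if_pos (eq_one_of_norm_eq_one_of_arg_eq_zero hξ h), h, neg_zero, if_neg (lt_irrefl 0)]
    omega
  · have hξ₁ : ξ ≠ 1 := by rintro rfl; simp at h
    rw [if_pos h, if_neg (by linarith), if_neg hξ₁]
    omega

theorem roots_map_complex_map_conj (f : ℝ[X]) :
    (f.map (algebraMap ℝ ℂ)).roots.map conj = (f.map (algebraMap ℝ ℂ)).roots := by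
  rw [← (IsAlgClosed.splits _).roots_map, Polynomial.map_map]
  congr 2
  ext x
  simp

theorem count_roots_map_of_injective {A B : Type*} [CommRing A] [CommRing B] [IsDomain B]
    [DecidableEq B] {φ : A →+* B} (hφ : Function.Injective φ) (p : A[X]) (a : A) :
    (p.map φ).roots.count (φ a) = rootMultiplicity a p := by
  rw [count_roots]
  exact (eq_rootMultiplicity_map hφ a).symm

theorem two_mul_argCount_odd_half {f : ℝ[X]} (m : ℕ)
    (hroots : ∀ ξ ∈ (f.map (algebraMap ℝ ℂ)).roots, ξ = 0 ∨ (‖ξ‖ = 1 ∧ ξ ≠ -1)) :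
    2 * argCount ((2 * m + 1) / 2) f + (2 * m + 1) * rootMultiplicity 0 f + rootMultiplicity 1 f
      = (2 * m + 1) * f.natDegree := by
  set S := (f.map (algebraMap ℝ ℂ)).roots
  set t : ℝ := (2 * m + 1) / 2
  have hpoint : ∀ ξ ∈ S, angleCount t ξ + angleCount t (conj ξ)
      + ((2 * m + 1) * (if 0 = ξ then 1 else 0) + (if 1 = ξ then 1 else 0)) = 2 * m + 1 := by
    intro ξ hξ
    rcases hroots ξ hξ with rfl | ⟨hξ, hξ'⟩
    · simp [angleCount_zero]
    · have hξ₀ : (0 : ℂ) ≠ ξ := by rintro rfl; simp at hξ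
      simpa [hξ₀, eq_comm] using angleCount_odd_half_add_angleCount_conj hξ hξ' m
  have hsum := congrArg Multiset.sum (Multiset.map_congr rfl hpoint)
  rw [Multiset.map_const', Multiset.sum_replicate, Multiset.sum_map_add, Multiset.sum_map_add,
    Multiset.sum_map_add, Multiset.sum_map_mul_left, Multiset.sum_map_ite_eq_count,
    Multiset.sum_map_ite_eq_count] at hsum
  have hconj : (S.map fun ξ => angleCount t (conj ξ)).sum = (S.map (angleCount t)).sum := by
    simpa using congrArg (fun s => (s.map (angleCount t)).sum) (roots_map_complex_map_conj f)
  have hcard : Multiset.card S = f.natDegree := by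
    rw [IsAlgClosed.card_roots_eq_natDegree, natDegree_map]
  have hcount₀ : S.count 0 = rootMultiplicity 0 f := by
    simpa only [map_zero] using count_roots_map_of_injective (algebraMap ℝ ℂ).injective f 0
  have hcount₁ : S.count 1 = rootMultiplicity 1 f := by
    simpa only [map_one] using count_roots_map_of_injective (algebraMap ℝ ℂ).injective f 1
  rw [hconj, hcard, hcount₀, hcount₁, smul_eq_mul, ← argCount_eq_sum_angleCount] at hsum
  linarith

theorem piFn_d_two_general (κ : ℕ) (hodd : Odd κ) (f : Polynomial ℝ)
    (hroots : RootsZeroOrUnity f) (h1 : f.eval (-1) ≠ 0) :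
    piFn κ 2 f = (κ : ℚ) * (f.natDegree : ℚ) := by
  obtain ⟨m, rfl⟩ := hodd
  have hunit : ∀ ξ ∈ (f.map (algebraMap ℝ ℂ)).roots, ξ = 0 ∨ (‖ξ‖ = 1 ∧ ξ ≠ -1) := by
    intro ξ hξ
    refine (hroots ξ hξ).imp_right fun ⟨n, hn, hξn⟩ => ⟨norm_eq_one_of_pow_eq_one hξn hn.ne', ?_⟩
    rintro rfl
    refine h1 (IsRoot.of_map (f := algebraMap ℝ ℂ) ?_ (algebraMap ℝ ℂ).injective)
    simpa using isRoot_of_mem_roots hξ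
  have hcount := congrArg (Nat.cast : ℕ → ℚ) (two_mul_argCount_odd_half m hunit)
  have ht : ((2 * m + 1 : ℕ) : ℝ) / ((2 : ℕ) : ℝ) = (2 * m + 1) / 2 := by push_cast; ring
  rw [piFn, ht]
  push_cast at hcount ⊢
  linear_combination hcount / 2

/-- Proposition 5.1, case `d = 2`: if `κ` is odd and `f(−1) ≠ 0` then `π_{κ/2}(f) = κ·A(f)`. -/
theorem piFn_d_two (κ : ℕ) (hκ : 0 < κ) (hodd : Odd κ) (f : Polynomial ℝ) (hf : f ≠ 0)
    (hroots : RootsZeroOrUnity f) (h1 : f.eval (-1) ≠ 0) :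
    piFn κ 2 f = (κ : ℚ) * (f.natDegree : ℚ) :=
  piFn_d_two_general κ hodd f hroots h1
end

section
/- Let d ≥ 2 and κ ≥ 1 be coprime integers, and let e = d if 4 divides d, e = 2d if d is odd, and e = d/2 if d ≡ 2 (mod 4). For all integers n, m ≥ 0: π_{κ/d}(∏_{i=n+1}^{n+d}(q^i − 1)) − π_{κ/d}(∏_{i=m+1}^{m+d}(q^i − 1)) = 2κ(n−m), and π_{κ/d}(∏_{i=n+1}^{n+e}((−q)^i − 1)) − π_{κ/d}(∏_{i=m+1}^{m+e}((−q)^i − 1)) = 2κ(n−m)e/d. -/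
open Polynomial

/-!
`π_t` (with `t = κ / d`) is additive on products of nonzero polynomials and unchanged by a sign.
The roots of `X ^ N - 1` are the simple roots `e^{2πik/N}`, so
`π_t (X ^ N - 1) = N t + ⌊N t⌋ + 1/2`. For odd `N`, `(X ^ N - 1)(X ^ N + 1) = X ^ (2N) - 1`
and Hermite's identity `⌊2x⌋ = ⌊x⌋ + ⌊x + 1/2⌋` give `π_t ((-X) ^ N - 1) = N t + ⌊N t + 1/2⌋`.
Shifting `N` by `p` adds `2 p t` to the first value when `p t ∈ ℤ`, and to the second when
`2 p t` is an integer of the same parity as `p`. Hence a sum over a window `(n, n + p]` grows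
linearly in `n`.
-/

open Real

theorem Int.floor_two_mul {α : Type*} [Field α] [LinearOrder α] [IsStrictOrderedRing α]
    [FloorRing α] (x : α) : ⌊2 * x⌋ = ⌊x⌋ + ⌊x + 1 / 2⌋ := by
  have h₀ := Int.floor_le x
  have h₁ := Int.lt_floor_add_one x
  rcases lt_or_ge x (⌊x⌋ + 1 / 2) with hx | hx
  · have h₂ : ⌊x + 1 / 2⌋ = ⌊x⌋ := by rw [Int.floor_eq_iff]; constructor <;> linarith
    have h₃ : ⌊2 * x⌋ = ⌊x⌋ + ⌊x⌋ := by rw [Int.floor_eq_iff]; push_cast; constructor <;> linarith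
    rw [h₂, h₃]
  · have h₂ : ⌊x + 1 / 2⌋ = ⌊x⌋ + 1 := by rw [Int.floor_eq_iff]; push_cast; constructor <;> linarith
    have h₃ : ⌊2 * x⌋ = ⌊x⌋ + (⌊x⌋ + 1) := by
      rw [Int.floor_eq_iff]; push_cast; constructor <;> linarith
    rw [h₂, h₃]

theorem Finset.sum_Ioc_add_eq_of_add_eq {M : Type*} [AddCancelCommMonoid M] {F : ℕ → M} {p : ℕ}
    {c : M} (hF : ∀ i, F (i + p) = F i + c) (n : ℕ) :
    ∑ i ∈ Ioc n (n + p), F i = ∑ i ∈ Ioc 0 p, F i + n • c := by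
  induction n with
  | zero => simp
  | succ n ih =>
    have hsplit : F (n + 1) + ∑ i ∈ Ioc (n + 1) (n + 1 + p), F i
        = ∑ i ∈ Ioc n (n + p), F i + F (n + 1 + p) := by
      rw [← Finset.sum_singleton F (n + 1), ← Nat.Ioc_succ_singleton,
        Finset.sum_Ioc_consecutive F n.le_succ (by omega), show n + 1 + p = n + p + 1 by omega,
        Finset.sum_Ioc_succ_top (by omega)]
    rw [hF, ih] at hsplit
    exact add_left_cancel (hsplit.trans (by rw [succ_nsmul]; abel))

lemma exp_mul_I_pow_eq_one_iff_mem_image {N : ℕ} (hN : N ≠ 0) (t l : ℝ) :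
    (0 < l ∧ l ≤ 2 * π * t ∧ Complex.exp (l * Complex.I) ^ N = 1) ↔
      l ∈ (Finset.Icc 1 ⌊N * t⌋₊).image (fun k : ℕ => 2 * π * k / N) := by
  have hN' : (0 : ℝ) < N := by positivity
  simp only [Finset.mem_image, Finset.mem_Icc]
  rw [← Complex.exp_nat_mul, Complex.exp_eq_one_iff]
  constructor
  · rintro ⟨hl, hlt, k, hk⟩
    have hk' : (N : ℝ) * l = k * (2 * π) := by
      simpa using congrArg Complex.im hk
    have hk0 : 0 < k := by
      have : (0 : ℝ) < k := by nlinarith [Real.pi_pos]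
      exact_mod_cast this
    have hcast : ((k.toNat : ℕ) : ℝ) = k := by exact_mod_cast Int.toNat_of_nonneg hk0.le
    refine ⟨k.toNat, ⟨by omega, (Nat.le_floor_iff' (by omega)).2 ?_⟩, ?_⟩
    · rw [hcast]; nlinarith [Real.pi_pos]
    · rw [hcast]; field_simp; linarith
  · rintro ⟨k, ⟨hk1, hkt⟩, rfl⟩
    rw [Nat.le_floor_iff' (by omega)] at hkt
    have hk0 : (0 : ℝ) < k := by exact_mod_cast hk1
    refine ⟨by positivity, ?_, k, ?_⟩
    · rw [div_le_iff₀ hN']; nlinarith [Real.pi_pos]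
    · push_cast; field_simp

lemma argCount_mul (t : ℝ) {f g : ℝ[X]} (hf : f ≠ 0) (hg : g ≠ 0) :
    argCount t (f * g) = argCount t f + argCount t g := by
  rw [argCount, argCount, argCount, Polynomial.map_mul,
    roots_mul (mul_ne_zero (map_ne_zero hf) (map_ne_zero hg)), Multiset.map_add, Multiset.sum_add]

lemma argCount_neg (t : ℝ) (f : ℝ[X]) : argCount t (-f) = argCount t f := by
  rw [argCount, argCount, Polynomial.map_neg, roots_neg]

lemma argCount_X_pow_sub_one (t : ℝ) {N : ℕ} (hN : N ≠ 0) :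
    argCount t (X ^ N - 1) = ⌊N * t⌋₊ := by
  classical
  set A := (Finset.Icc 1 ⌊N * t⌋₊).image (fun k : ℕ => 2 * π * k / N)
  set R := (nthRoots N (1 : ℂ)).toFinset
  have hR (ξ : ℂ) : ξ ∈ R ↔ ξ ^ N = 1 := by
    rw [Multiset.mem_toFinset, mem_nthRoots (Nat.pos_of_ne_zero hN)]
  have hnodup : (nthRoots N (1 : ℂ)).Nodup :=
    nodup_roots (separable_X_pow_sub_C 1 (by exact_mod_cast hN) one_ne_zero)
  have hfiber : ∀ ξ ∈ R, Nat.card {l : ℝ // 0 < l ∧ l ≤ 2 * π * t ∧ Complex.exp (l * Complex.I) = ξ}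
      = (A.filter (fun l : ℝ => Complex.exp (l * Complex.I) = ξ)).card := by
    intro ξ hξ
    rw [← Nat.card_eq_finsetCard]
    refine Nat.card_congr (Equiv.subtypeEquivRight fun l => ?_)
    rw [Finset.mem_filter, ← exp_mul_I_pow_eq_one_iff_mem_image hN]
    constructor
    · rintro ⟨h0, h1, rfl⟩
      exact ⟨⟨h0, h1, (hR _).1 hξ⟩, rfl⟩
    · rintro ⟨⟨h0, h1, -⟩, h⟩
      exact ⟨h0, h1, h⟩
  have hinj : Function.Injective (fun k : ℕ => 2 * π * k / N) := by
    intro j k hjk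
    have hN' : (N : ℝ) ≠ 0 := by exact_mod_cast hN
    simpa [hN', Real.pi_ne_zero] using hjk
  calc argCount t (X ^ N - 1)
      = ∑ ξ ∈ R, Nat.card {l : ℝ // 0 < l ∧ l ≤ 2 * π * t ∧ Complex.exp (l * Complex.I) = ξ} := by
        rw [argCount, Finset.sum_eq_multiset_sum, Multiset.toFinset_val, hnodup.dedup]
        simp [nthRoots]
    _ = ∑ ξ ∈ R, (A.filter (fun l : ℝ => Complex.exp (l * Complex.I) = ξ)).card :=
        Finset.sum_congr rfl hfiber
    _ = A.card := (Finset.card_eq_sum_card_fiberwise fun l hl =>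
        (hR _).2 ((exp_mul_I_pow_eq_one_iff_mem_image hN t l).2 hl).2.2).symm
    _ = ⌊N * t⌋₊ := by rw [Finset.card_image_of_injective _ hinj, Nat.card_Icc, Nat.add_sub_cancel]

lemma X_pow_sub_one_ne_zero {i : ℕ} (hi : i ≠ 0) : (X ^ i - 1 : ℝ[X]) ≠ 0 := fun h => by
  simpa [hi] using congrArg (eval 0) h

lemma neg_X_pow_sub_one_ne_zero {i : ℕ} (hi : i ≠ 0) : ((-X) ^ i - 1 : ℝ[X]) ≠ 0 := fun h => by
  simpa [hi] using congrArg (eval 0) h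

lemma rootMultiplicity_one_X_pow_sub_one {i : ℕ} (hi : i ≠ 0) :
    rootMultiplicity 1 (X ^ i - 1 : ℝ[X]) = 1 := by
  have hsep : (X ^ i - C 1 : ℝ[X]).Separable :=
    separable_X_pow_sub_C 1 (by exact_mod_cast hi) one_ne_zero
  rw [map_one] at hsep
  exact le_antisymm (rootMultiplicity_le_one_of_separable hsep 1)
    ((rootMultiplicity_pos (X_pow_sub_one_ne_zero hi)).2 (by simp))

def piPowSubOne (t : ℚ) (i : ℕ) : ℚ := i * t + ⌊i * t⌋ + 1 / 2

def piNegPowSubOne (t : ℚ) (i : ℕ) : ℚ :=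
  if Even i then piPowSubOne t i else i * t + ⌊i * t + 1 / 2⌋

section piFn

variable (κ d : ℕ)

lemma piFn_mul {f g : ℝ[X]} (hf : f ≠ 0) (hg : g ≠ 0) :
    piFn κ d (f * g) = piFn κ d f + piFn κ d g := by
  rw [piFn, piFn, piFn, rootMultiplicity_mul (mul_ne_zero hf hg),
    rootMultiplicity_mul (mul_ne_zero hf hg), natDegree_mul hf hg, argCount_mul _ hf hg]
  push_cast
  ring

lemma piFn_neg (f : ℝ[X]) : piFn κ d (-f) = piFn κ d f := by
  classical
  simp only [piFn, ← count_roots, roots_neg, natDegree_neg, argCount_neg]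

lemma piFn_one : piFn κ d 1 = 0 := by
  classical
  simp [piFn, argCount, ← count_roots]

lemma piFn_prod {ι : Type*} (s : Finset ι) (f : ι → ℝ[X]) (hf : ∀ i ∈ s, f i ≠ 0) :
    piFn κ d (∏ i ∈ s, f i) = ∑ i ∈ s, piFn κ d (f i) := by
  induction s using Finset.cons_induction with
  | empty => exact piFn_one κ d
  | cons a s ha ih =>
    rw [Finset.forall_mem_cons] at hf
    rw [Finset.prod_cons, Finset.sum_cons, piFn_mul κ d hf.1 (Finset.prod_ne_zero_iff.2 hf.2),
      ih hf.2]

lemma piFn_X_pow_sub_one {i : ℕ} (hi : i ≠ 0) :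
    piFn κ d (X ^ i - 1) = piPowSubOne (κ / d) i := by
  have hfloor : ((⌊(i : ℝ) * (κ / d)⌋₊ : ℕ) : ℚ) = ⌊(i : ℚ) * (κ / d)⌋ := by
    rw [show (i : ℝ) * (κ / d) = ((i * (κ / d) : ℚ) : ℝ) by push_cast; rfl,
      ← Int.cast_natCast, Int.natCast_floor_eq_floor (by positivity), Rat.floor_cast]
  rw [piFn, piPowSubOne, rootMultiplicity_eq_zero (by simp [hi]),
    rootMultiplicity_one_X_pow_sub_one hi, argCount_X_pow_sub_one _ hi, hfloor,
    show (X ^ i - 1 : ℝ[X]) = X ^ i - C 1 by rw [map_one], natDegree_X_pow_sub_C]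
  push_cast
  ring

lemma piFn_neg_X_pow_sub_one {i : ℕ} (hi : i ≠ 0) :
    piFn κ d ((-X) ^ i - 1) = piNegPowSubOne (κ / d) i := by
  rcases Nat.even_or_odd i with heven | hodd
  · rw [piNegPowSubOne, if_pos heven, heven.neg_pow, piFn_X_pow_sub_one κ d hi]
  have hfactor : (X ^ i - 1 : ℝ[X]) * -((-X) ^ i - 1) = X ^ (2 * i) - 1 := by
    rw [hodd.neg_pow]
    ring
  have h := congrArg (piFn κ d) hfactor
  rw [piFn_mul κ d (X_pow_sub_one_ne_zero hi) (neg_ne_zero.2 (neg_X_pow_sub_one_ne_zero hi)),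
    piFn_neg, piFn_X_pow_sub_one κ d hi, piFn_X_pow_sub_one κ d (by omega), piPowSubOne,
    piPowSubOne, show ((2 * i : ℕ) : ℚ) * (κ / d) = 2 * (i * (κ / d)) by push_cast; ring,
    Int.floor_two_mul] at h
  rw [piNegPowSubOne, if_neg (Nat.not_even_iff_odd.2 hodd)]
  push_cast at h
  linarith

lemma piPowSubOne_add {t : ℚ} {p : ℕ} {k : ℤ} (hk : p * t = k) (i : ℕ) :
    piPowSubOne t (i + p) = piPowSubOne t i + 2 * k := by
  rw [piPowSubOne, piPowSubOne, Nat.cast_add, add_mul, hk, Int.floor_add_intCast]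
  push_cast
  ring

lemma piNegPowSubOne_add {t : ℚ} {p : ℕ} {k : ℤ} (hk : 2 * p * t = k)
    (hkp : Even k ↔ Even p) (i : ℕ) :
    piNegPowSubOne t (i + p) = piNegPowSubOne t i + k := by
  unfold piNegPowSubOne
  rcases Nat.even_or_odd p with hp | hp
  · obtain ⟨j, rfl⟩ := hkp.2 hp
    have hj : (p : ℚ) * t = j := by push_cast at hk; linarith
    have hpar : Even (i + p) ↔ Even i := by simp [Nat.even_add, hp]
    by_cases hi : Even i
    · rw [if_pos (hpar.2 hi), if_pos hi, piPowSubOne_add hj]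
      push_cast
      ring
    · rw [if_neg (mt hpar.1 hi), if_neg hi, Nat.cast_add, add_mul, hj,
        show (i : ℚ) * t + j + 1 / 2 = i * t + 1 / 2 + j by ring, Int.floor_add_intCast]
      push_cast
      ring
  · obtain ⟨j, rfl⟩ := Int.not_even_iff_odd.1 (mt hkp.1 (Nat.not_even_iff_odd.2 hp))
    have hshift : ((i + p : ℕ) : ℚ) * t = i * t + j + 1 / 2 := by push_cast at hk ⊢; linarith
    have hpar : Even (i + p) ↔ ¬Even i := by simp [Nat.even_add, Nat.not_even_iff_odd.2 hp]
    by_cases hi : Even i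
    · rw [if_neg (hpar.not.2 (not_not.2 hi)), if_pos hi, piPowSubOne, hshift,
        show (i : ℚ) * t + j + 1 / 2 + 1 / 2 = i * t + (j + 1 : ℤ) by push_cast; ring,
        Int.floor_add_intCast]
      push_cast
      ring
    · rw [if_pos (hpar.2 hi), if_neg hi, piPowSubOne, hshift,
        show (i : ℚ) * t + j + 1 / 2 = i * t + 1 / 2 + j by ring, Int.floor_add_intCast]
      push_cast
      ring

lemma piFn_prod_Ioc {f : ℕ → ℝ[X]} {F : ℕ → ℚ} {p : ℕ} {c : ℚ} (hf : ∀ i ≠ 0, f i ≠ 0)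
    (hfF : ∀ i ≠ 0, piFn κ d (f i) = F i) (hF : ∀ i, F (i + p) = F i + c) (n : ℕ) :
    piFn κ d (∏ i ∈ Finset.Ioc n (n + p), f i) = ∑ i ∈ Finset.Ioc 0 p, F i + n * c := by
  have hpos : ∀ i ∈ Finset.Ioc n (n + p), i ≠ 0 := fun i hi => by
    rw [Finset.mem_Ioc] at hi
    omega
  rw [piFn_prod κ d _ _ fun i hi => hf i (hpos i hi),
    Finset.sum_congr rfl fun i hi => hfF i (hpos i hi), Finset.sum_Ioc_add_eq_of_add_eq hF,
    nsmul_eq_mul]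

end piFn

lemma exists_int_two_mul_mul_div_even_iff {κ d e : ℕ} (hd : d ≠ 0) (hcop : Nat.Coprime κ d)
    (he : (4 ∣ d ∧ e = d) ∨ (d % 2 = 1 ∧ e = 2 * d) ∨ (d % 4 = 2 ∧ 2 * e = d)) :
    ∃ k : ℤ, 2 * e * ((κ : ℚ) / d) = k ∧ (Even k ↔ Even e) := by
  rcases he with ⟨h4, rfl⟩ | ⟨-, rfl⟩ | ⟨h2, rfl⟩
  · exact ⟨2 * κ, by push_cast; field_simp, iff_of_true (even_two_mul _)
      (even_iff_two_dvd.2 ((by norm_num : 2 ∣ 4).trans h4))⟩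
  · exact ⟨2 * (2 * κ), by push_cast; field_simp, iff_of_true (even_two_mul _) (even_two_mul _)⟩
  · have he0 : (e : ℚ) ≠ 0 := Nat.cast_ne_zero.2 (by omega)
    have hκ : Odd κ := (Nat.coprime_mul_iff_right.1 hcop).1.odd_of_right
    refine ⟨κ, by push_cast; field_simp, iff_of_false ?_ ?_⟩
    · rwa [Int.even_coe_nat, Nat.not_even_iff_odd]
    · exact Nat.not_even_iff_odd.2 (Nat.odd_iff.2 (by omega))

theorem piFn_prod_diff_general (κ d : ℕ) (hd : 2 ≤ d) (hcop : Nat.Coprime κ d)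
    (e : ℕ)
    (he : (4 ∣ d ∧ e = d) ∨ (d % 2 = 1 ∧ e = 2 * d) ∨ (d % 4 = 2 ∧ 2 * e = d))
    (n m : ℕ) :
    (piFn κ d (∏ i ∈ Finset.Ioc n (n + d), (X ^ i - 1)) -
        piFn κ d (∏ i ∈ Finset.Ioc m (m + d), (X ^ i - 1)) =
      2 * (κ : ℚ) * ((n : ℚ) - (m : ℚ))) ∧
    (piFn κ d (∏ i ∈ Finset.Ioc n (n + e), ((-X) ^ i - 1)) -
        piFn κ d (∏ i ∈ Finset.Ioc m (m + e), ((-X) ^ i - 1)) =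
      2 * (κ : ℚ) * ((n : ℚ) - (m : ℚ)) * (e : ℚ) / (d : ℚ)) := by
  have hd0 : (d : ℚ) ≠ 0 := by positivity
  have hstep : ∀ i, piPowSubOne (κ / d) (i + d) = piPowSubOne (κ / d) i + 2 * κ :=
    piPowSubOne_add (k := κ) (by field_simp; norm_cast)
  obtain ⟨k, hk, hkp⟩ := exists_int_two_mul_mul_div_even_iff (by omega) hcop he
  have hstepNeg : ∀ i, piNegPowSubOne (κ / d) (i + e) = piNegPowSubOne (κ / d) i + k :=
    piNegPowSubOne_add hk hkp
  constructor
  · rw [piFn_prod_Ioc κ d (fun _ => X_pow_sub_one_ne_zero) (fun _ => piFn_X_pow_sub_one κ d) hstep,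
      piFn_prod_Ioc κ d (fun _ => X_pow_sub_one_ne_zero) (fun _ => piFn_X_pow_sub_one κ d) hstep]
    ring
  · rw [piFn_prod_Ioc κ d (fun _ => neg_X_pow_sub_one_ne_zero)
        (fun _ => piFn_neg_X_pow_sub_one κ d) hstepNeg,
      piFn_prod_Ioc κ d (fun _ => neg_X_pow_sub_one_ne_zero)
        (fun _ => piFn_neg_X_pow_sub_one κ d) hstepNeg, ← hk]
    field_simp
    ring

/-- Proposition 8.4: with `e = d` if `4 ∣ d`, `e = 2d` if `d` is odd, and `e = d/2` if
`d ≡ 2 (mod 4)`, for all `n, m ≥ 0`: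
`π_{κ/d}(∏_{i=n+1}^{n+d}(q^i − 1)) − π_{κ/d}(∏_{i=m+1}^{m+d}(q^i − 1)) = 2κ(n−m)` and
`π_{κ/d}(∏_{i=n+1}^{n+e}((−q)^i − 1)) − π_{κ/d}(∏_{i=m+1}^{m+e}((−q)^i − 1)) = 2κ(n−m)e/d`. -/
theorem piFn_prod_diff (κ d : ℕ) (hd : 2 ≤ d) (hκ : 1 ≤ κ) (hcop : Nat.Coprime κ d)
    (e : ℕ)
    (he : (4 ∣ d ∧ e = d) ∨ (d % 2 = 1 ∧ e = 2 * d) ∨ (d % 4 = 2 ∧ 2 * e = d))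
    (n m : ℕ) :
    (piFn κ d (∏ i ∈ Finset.Ioc n (n + d), (X ^ i - 1)) -
        piFn κ d (∏ i ∈ Finset.Ioc m (m + d), (X ^ i - 1)) =
      2 * (κ : ℚ) * ((n : ℚ) - (m : ℚ))) ∧
    (piFn κ d (∏ i ∈ Finset.Ioc n (n + e), ((-X) ^ i - 1)) -
        piFn κ d (∏ i ∈ Finset.Ioc m (m + e), ((-X) ^ i - 1)) =
      2 * (κ : ℚ) * ((n : ℚ) - (m : ℚ)) * (e : ℚ) / (d : ℚ)) :=
  piFn_prod_diff_general κ d hd hcop e he n m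
end
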